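/- Let M be a pointed metric space and let (μ_n) be a weakly Cauchy sequence in the Lipschitz-free space F(M). Then for every ε > 0 there exists a bounded subset C ⊂ M such that μ_n ∈ F(C) + ε·B_{F(M)} for every n. -/

import Mathlib

open Metric NNReal ENNReal Set Filter Topology

noncomputable section

namespace FreeSpace

variable {M : Type*} [MetricSpace M]

/-- The submodule of `M → ℝ` consisting of Lipschitz functions vanishing at `base`. -/
def lip0SM (M : Type*) [MetricSpace M] (base : M) : Submodule ℝ (M → ℝ) where
  carrier := {f | (∃ K : ℝ≥0, LipschitzWith K f) ∧ f base = 0}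
  add_mem' := by
    rintro f g ⟨⟨K, hK⟩, hf⟩ ⟨⟨L, hL⟩, hg⟩
    exact ⟨⟨K + L, hK.add hL⟩, by simp [hf, hg]⟩
  zero_mem' := ⟨⟨0, LipschitzWith.const (0 : ℝ)⟩, rfl⟩
  smul_mem' := by
    rintro c f ⟨⟨K, hK⟩, hf⟩
    refine ⟨⟨‖c‖₊ * K, ?_⟩, by simp [hf]⟩
    apply LipschitzWith.of_dist_le_mul
    intro x y
    have h1 := hK.dist_le_mul x y
    calc dist ((c • f) x) ((c • f) y) = ‖c‖ * dist (f x) (f y) := by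
          simp only [Pi.smul_apply]; rw [dist_smul₀]
      _ ≤ ‖c‖ * (↑K * dist x y) := by
          exact mul_le_mul_of_nonneg_left h1 (norm_nonneg c)
      _ = ↑(‖c‖₊ * K) * dist x y := by push_cast; ring

theorem lipschitzWith_sInf {f : M → ℝ} (hf : ∃ K : ℝ≥0, LipschitzWith K f) :
    LipschitzWith (sInf {K : ℝ≥0 | LipschitzWith K f}) f := by
  obtain ⟨K₀, hK₀⟩ := hf
  apply LipschitzWith.of_dist_le_mul
  intro x y
  rcases eq_or_ne x y with rfl | hxy
  · simp
  · have hpos : 0 < dist x y := dist_pos.mpr hxy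
    rw [← div_le_iff₀ hpos]
    have h2 : (⟨dist (f x) (f y) / dist x y, div_nonneg dist_nonneg dist_nonneg⟩ : ℝ≥0) ≤
        sInf {K : ℝ≥0 | LipschitzWith K f} := by
      apply le_csInf ⟨K₀, hK₀⟩
      intro K hK
      apply NNReal.coe_le_coe.mp
      show dist (f x) (f y) / dist x y ≤ (K : ℝ)
      rw [div_le_iff₀ hpos]
      exact hK.dist_le_mul x y
    exact NNReal.coe_le_coe.mpr h2

/-- The space `Lip₀(M)` of Lipschitz functions vanishing at the base point. -/
def Lip0 (M : Type*) [MetricSpace M] (base : M) : Type _ := ↥(lip0SM M base)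

namespace Lip0

variable {base : M}

instance : AddCommGroup (Lip0 M base) := inferInstanceAs (AddCommGroup ↥(lip0SM M base))
instance : Module ℝ (Lip0 M base) := inferInstanceAs (Module ℝ ↥(lip0SM M base))

/-- The underlying function of an element of `Lip₀(M)`. -/
def toFun (f : Lip0 M base) : M → ℝ := Subtype.val f

theorem exists_lip (f : Lip0 M base) : ∃ K : ℝ≥0, LipschitzWith K f.toFun := f.2.1

theorem map_base (f : Lip0 M base) : f.toFun base = 0 := f.2.2

private theorem neg_set_eq (g : M → ℝ) :
    {K : ℝ≥0 | LipschitzWith K (-g)} = {K : ℝ≥0 | LipschitzWith K g} := by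
  ext K
  simp only [Set.mem_setOf_eq]
  constructor
  · intro h
    have h2 : LipschitzWith K (fun x => -((-g) x)) := h.neg
    simpa [neg_neg] using h2
  · intro h
    exact h.neg

instance : NormedAddCommGroup (Lip0 M base) :=
  AddGroupNorm.toNormedAddCommGroup
  { toFun := fun f => ((sInf {K : ℝ≥0 | LipschitzWith K f.toFun} : ℝ≥0) : ℝ)
    map_zero' := by
      have h0 : LipschitzWith 0 (0 : Lip0 M base).toFun := LipschitzWith.const (0 : ℝ)
      have h1 : sInf {K : ℝ≥0 | LipschitzWith K (0 : Lip0 M base).toFun} = 0 :=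
        le_antisymm (csInf_le (OrderBot.bddBelow _) h0) zero_le
      simp [h1]
    add_le' := by
      intro f g
      have hf := lipschitzWith_sInf f.exists_lip
      have hg := lipschitzWith_sInf g.exists_lip
      have hfg : LipschitzWith (sInf {K : ℝ≥0 | LipschitzWith K f.toFun} +
          sInf {K : ℝ≥0 | LipschitzWith K g.toFun}) (f + g).toFun := hf.add hg
      have h2 : sInf {K : ℝ≥0 | LipschitzWith K (f + g).toFun} ≤
          sInf {K : ℝ≥0 | LipschitzWith K f.toFun} +
          sInf {K : ℝ≥0 | LipschitzWith K g.toFun} :=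
        csInf_le (OrderBot.bddBelow _) hfg
      rw [← NNReal.coe_add]
      exact NNReal.coe_le_coe.mpr h2
    neg' := by
      intro f
      exact congrArg (fun S : Set ℝ≥0 => ((sInf S : ℝ≥0) : ℝ)) (neg_set_eq f.toFun)
    eq_zero_of_map_eq_zero' := by
      intro f h
      have h0 : sInf {K : ℝ≥0 | LipschitzWith K f.toFun} = 0 := NNReal.coe_eq_zero.mp h
      have hl : LipschitzWith 0 f.toFun := h0 ▸ lipschitzWith_sInf f.exists_lip
      apply Subtype.ext
      funext x
      have h1 : dist (f.toFun x) (f.toFun base) ≤ 0 := by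
        simpa using hl.dist_le_mul x base
      have h2 : f.toFun x = f.toFun base := by
        rw [← dist_le_zero]; exact h1
      show f.toFun x = 0
      rw [h2, f.map_base] }

theorem norm_def (f : Lip0 M base) :
    ‖f‖ = ((sInf {K : ℝ≥0 | LipschitzWith K f.toFun} : ℝ≥0) : ℝ) := rfl

theorem lipschitzWith_norm (f : Lip0 M base) :
    LipschitzWith (sInf {K : ℝ≥0 | LipschitzWith K f.toFun}) f.toFun :=
  lipschitzWith_sInf f.exists_lip

instance : NormedSpace ℝ (Lip0 M base) where
  norm_smul_le c f := by
    have hf := lipschitzWith_sInf f.exists_lip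
    have h1 : LipschitzWith (‖c‖₊ * sInf {K : ℝ≥0 | LipschitzWith K f.toFun})
        (c • f).toFun := by
      apply LipschitzWith.of_dist_le_mul
      intro x y
      have h2 := hf.dist_le_mul x y
      calc dist ((c • f).toFun x) ((c • f).toFun y)
          = ‖c‖ * dist (f.toFun x) (f.toFun y) := by
            show dist (c • f.toFun x) (c • f.toFun y) = _
            rw [dist_smul₀]
        _ ≤ ‖c‖ * (↑(sInf {K : ℝ≥0 | LipschitzWith K f.toFun}) * dist x y) :=
            mul_le_mul_of_nonneg_left h2 (norm_nonneg c)
        _ = ↑(‖c‖₊ * sInf {K : ℝ≥0 | LipschitzWith K f.toFun}) * dist x y := by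
            push_cast; ring
    have h3 : sInf {K : ℝ≥0 | LipschitzWith K (c • f).toFun} ≤
        ‖c‖₊ * sInf {K : ℝ≥0 | LipschitzWith K f.toFun} :=
      csInf_le (OrderBot.bddBelow _) h1
    show ((sInf {K : ℝ≥0 | LipschitzWith K (c • f).toFun} : ℝ≥0) : ℝ) ≤
      ‖c‖ * ((sInf {K : ℝ≥0 | LipschitzWith K f.toFun} : ℝ≥0) : ℝ)
    rw [← coe_nnnorm c, ← NNReal.coe_mul]
    exact NNReal.coe_le_coe.mpr h3

end Lip0

/-- The evaluation functional `δ(x) : f ↦ f(x)` as an element of the dual of `Lip₀(M)`. -/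
def evalδ (base : M) (x : M) : StrongDual ℝ (Lip0 M base) :=
  LinearMap.mkContinuous
    { toFun := fun f => f.toFun x
      map_add' := fun f g => rfl
      map_smul' := fun c f => rfl }
    (dist x base)
    (by
      intro f
      have h1 := f.lipschitzWith_norm.dist_le_mul x base
      rw [Real.dist_eq, f.map_base, sub_zero] at h1
      show ‖f.toFun x‖ ≤ dist x base * ‖f‖
      rw [Real.norm_eq_abs, mul_comm]
      exact h1)

/-- The Lipschitz-free space `F(M)`: the closed linear span of the evaluation
functionals inside the dual of `Lip₀(M)`. -/
def Free (M : Type*) [MetricSpace M] (base : M) :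
    Submodule ℝ (StrongDual ℝ (Lip0 M base)) :=
  (Submodule.span ℝ (Set.range (evalδ base))).topologicalClosure

/-- `δ(x)` as an element of `F(M)`. -/
def deltaF (base : M) (x : M) : ↥(Free M base) :=
  ⟨evalδ base x,
    Submodule.le_topologicalClosure _ (Submodule.subset_span (Set.mem_range_self x))⟩

/-- For a subset `A ⊆ M`, the free space `F(A)`, canonically identified with the
closed linear span of `{δ(x) : x ∈ A}` inside `F(M)`. -/
def freeOn (base : M) (A : Set M) : Submodule ℝ ↥(Free M base) :=
  @Submodule.topologicalClosure _ _ _ _ _ _ _ (Free M base).toAddSubmonoid.continuousAdd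
    (Submodule.span ℝ (deltaF base '' A))

section BanachProps

variable (E : Type*) [NormedAddCommGroup E] [NormedSpace ℝ E]

/-- A sequence is weakly Cauchy if every continuous linear functional sends it
to a convergent sequence. -/
def WeaklyCauchy {E : Type*} [NormedAddCommGroup E] [NormedSpace ℝ E] (u : ℕ → E) : Prop :=
  ∀ φ : StrongDual ℝ E, ∃ l : ℝ, Tendsto (fun n => φ (u n)) atTop (𝓝 l)

/-- A set is weakly precompact if every sequence in it has a weakly Cauchy subsequence. -/
def WeaklyPrecompact {E : Type*} [NormedAddCommGroup E] [NormedSpace ℝ E] (W : Set E) : Prop :=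
  ∀ u : ℕ → E, (∀ n, u n ∈ W) → ∃ g : ℕ → ℕ, StrictMono g ∧ WeaklyCauchy (u ∘ g)

/-- A normed space is weakly sequentially complete if every weakly Cauchy sequence
converges weakly. -/
def WeaklySeqComplete : Prop :=
  ∀ u : ℕ → E, WeaklyCauchy u →
    ∃ x : E, ∀ φ : StrongDual ℝ E, Tendsto (fun n => φ (u n)) atTop (𝓝 (φ x))

/-- The Schur property: weakly null sequences are norm null. -/
def SchurProperty : Prop :=
  ∀ u : ℕ → E, (∀ φ : StrongDual ℝ E, Tendsto (fun n => φ (u n)) atTop (𝓝 0)) →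
    Tendsto (fun n => ‖u n‖) atTop (𝓝 0)

/-- The approximation property. -/
def ApproxProperty : Prop :=
  ∀ W : Set E, IsCompact W → ∀ ε > (0 : ℝ), ∃ S : E →L[ℝ] E,
    FiniteDimensional ℝ ↥(LinearMap.range (S : E →ₗ[ℝ] E)) ∧ ∀ w ∈ W, ‖S w - w‖ ≤ ε

/-- The Dunford–Pettis property. -/
def DunfordPettisProperty : Prop :=
  ∀ (u : ℕ → E) (φ : ℕ → StrongDual ℝ E),
    (∀ ψ : StrongDual ℝ E, Tendsto (fun n => ψ (u n)) atTop (𝓝 0)) →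
    (∀ Φ : StrongDual ℝ (StrongDual ℝ E),
      Tendsto (fun n => Φ (φ n)) atTop (𝓝 0)) →
    Tendsto (fun n => φ n (u n)) atTop (𝓝 0)

/-- `E` contains an isomorphic copy of `X`: some closed subspace of `E` is linearly
isomorphic to `X`. -/
def ContainsIsoCopy (X : Type*) [NormedAddCommGroup X] [NormedSpace ℝ X] : Prop :=
  ∃ Y : Submodule ℝ E, IsClosed (Y : Set E) ∧ Nonempty (X ≃L[ℝ] ↥Y)

end BanachProps

instance : Fact ((1 : ℝ≥0∞) ≤ 1) := ⟨le_rfl⟩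
instance : Fact ((1 : ℝ≥0∞) ≤ ⊤) := ⟨le_top⟩

/-- The space `ℓ¹` of absolutely summable real sequences. -/
abbrev ellOne : Type := lp (fun _ : ℕ => ℝ) 1

/-- The space `ℓ∞` of bounded real sequences. -/
abbrev ellInfty : Type := lp (fun _ : ℕ => ℝ) ⊤

/-- A Banach space is `ℓ₁`-saturated if every infinite-dimensional closed subspace
contains a closed subspace isomorphic to `ℓ₁`. -/
def L1Saturated (E : Type*) [NormedAddCommGroup E] [NormedSpace ℝ E] : Prop :=
  ∀ Y : Submodule ℝ E, IsClosed (Y : Set E) → ¬FiniteDimensional ℝ ↥Y →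
    ContainsIsoCopy ↥Y ellOne

end FreeSpace

/-!
Suppose some `ε > 0` admits no bounded `C`. By Hahn–Banach, for every ball `B` some `μ n` is then
`ε`-large on a `1`-Lipschitz function vanishing on `B`; as each single `μ n` is almost supported
on a ball, such `n` can be taken arbitrarily large. Truncating these functions gives humps `h k`,
`1`-Lipschitz and supported in disjoint annuli, and indices `n k, m k → ∞` such that `μ (n k)` sees
`h k` while `μ (m k)` does not, both are negligible on the later humps, and, by weak Cauchyness
applied to the sum of the earlier humps, both agree on it. Then `F = ∑ h k` is `2`-Lipschitz and
`⟨μ (n k) - μ (m k), F⟩ ≥ ε / 2` for all `k`, so `⟨μ n, F⟩` does not converge.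
-/

open Function

theorem LipschitzWith.tsum_of_pairwise_disjoint_support {α ι : Type*} [PseudoMetricSpace α]
    {f : ι → α → ℝ} {K : ℝ≥0} (hf : ∀ i, LipschitzWith K (f i))
    (hd : Pairwise (Disjoint on fun i => support (f i))) :
    LipschitzWith (2 * K) fun x => ∑' i, f i x := by
  rcases isEmpty_or_nonempty ι with hι | hι
  · simpa using (LipschitzWith.const (0 : ℝ)).weaken (K' := 2 * K) zero_le
  have hsingle : ∀ x, ∃ i, ∀ j ≠ i, f j x = 0 := by
    intro x
    by_cases hx : ∃ i, f i x ≠ 0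
    · obtain ⟨i, hi⟩ := hx
      exact ⟨i, fun j hji => not_not.mp fun hj => Set.disjoint_left.mp (hd hji) hj hi⟩
    · push Not at hx
      exact ⟨Classical.arbitrary ι, fun j _ => hx j⟩
  refine LipschitzWith.of_dist_le_mul fun x y => ?_
  obtain ⟨i, hi⟩ := hsingle x
  obtain ⟨j, hj⟩ := hsingle y
  have hxy_i := (hf i).dist_le_mul x y
  have hxy_j := (hf j).dist_le_mul x y
  rw [tsum_eq_single i hi, tsum_eq_single j hj]
  rcases eq_or_ne i j with rfl | hij
  · refine hxy_i.trans ?_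
    push_cast
    nlinarith [mul_nonneg K.coe_nonneg (dist_nonneg (x := x) (y := y))]
  · rw [Real.dist_eq] at hxy_i hxy_j ⊢
    calc |f i x - f j y| = |(f i x - f i y) + (f j x - f j y)| := by
          rw [hi j hij.symm, hj i hij]; ring_nf
      _ ≤ K * dist x y + K * dist x y := (abs_add_le _ _).trans (add_le_add hxy_i hxy_j)
      _ = ↑(2 * K) * dist x y := by push_cast; ring

theorem Submodule.exists_dual_le_apply_of_forall_lt_norm_sub {E : Type*}
    [SeminormedAddCommGroup E] [NormedSpace ℝ E] (S : Submodule ℝ E) {x : E} {ε : ℝ}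
    (h : ∀ s ∈ S, ε < ‖x - s‖) :
    ∃ Φ : StrongDual ℝ E, ‖Φ‖ ≤ 1 ∧ (∀ s ∈ S, Φ s = 0) ∧ ε ≤ Φ x := by
  obtain ⟨g, hg, hgx⟩ := exists_dual_vector'' ℝ (S.mkQ x)
  refine ⟨g.comp S.mkQL, ?_, fun s hs => ?_, ?_⟩
  · refine ContinuousLinearMap.opNorm_le_bound _ zero_le_one fun y => ?_
    calc ‖g (S.mkQ y)‖ ≤ ‖g‖ * ‖S.mkQ y‖ := g.le_opNorm _
      _ ≤ 1 * ‖y‖ := mul_le_mul hg (Quotient.norm_mk_le S y) (norm_nonneg _) zero_le_one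
  · change g (Quotient.mk s) = 0
    rw [(Quotient.mk_eq_zero S).mpr hs, map_zero]
  · change ε ≤ g (S.mkQ x)
    rw [hgx, RCLike.ofReal_real_eq_id, id]
    by_contra! hlt
    obtain ⟨y, hyx, hy⟩ := Quotient.norm_mk_lt (S.mkQ x) (sub_pos.mpr hlt)
    have := h _ ((Quotient.eq S).mp hyx.symm)
    rw [_root_.sub_sub_cancel] at this
    linarith

namespace FreeSpace

variable {M : Type*} [MetricSpace M] {base : M}

namespace Lip0

theorem toFun_sum {ι : Type*} (s : Finset ι) (f : ι → Lip0 M base) :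
    (∑ i ∈ s, f i).toFun = ∑ i ∈ s, (f i).toFun :=
  map_sum (lip0SM M base).subtype f s

theorem norm_le_of_lipschitzWith {f : Lip0 M base} {K : ℝ≥0} (h : LipschitzWith K f.toFun) :
    ‖f‖ ≤ K := by
  rw [norm_def]
  exact_mod_cast csInf_le (OrderBot.bddBelow _) h

theorem lipschitzWith_of_norm_le {f : Lip0 M base} {K : ℝ≥0} (h : ‖f‖ ≤ K) :
    LipschitzWith K f.toFun :=
  f.lipschitzWith_norm.weaken (by rw [norm_def] at h; exact_mod_cast h)

theorem abs_toFun_le (f : Lip0 M base) (x : M) : |f.toFun x| ≤ ‖f‖ * dist x base := by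
  have := f.lipschitzWith_norm.dist_le_mul x base
  rwa [Real.dist_eq, f.map_base, sub_zero, ← norm_def] at this

theorem exists_truncation (f : Lip0 M base) (hf : ‖f‖ ≤ 1) (R : ℝ) :
    ∃ h : Lip0 M base, ‖h‖ ≤ 1 ∧ EqOn h.toFun f.toFun (closedBall base R) ∧
      support h.toFun ⊆ support f.toFun ∩ ball base (2 * R) := by
  set u : M → ℝ := fun x => max 0 (2 * R - dist x base)
  have hu : LipschitzWith 1 u := by
    simpa using (LipschitzWith.const (0 : ℝ)).max
      ((LipschitzWith.const (2 * R)).sub (LipschitzWith.dist_left base))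
  have hu0 : ∀ x, 0 ≤ u x := fun x => le_max_left _ _
  set g : M → ℝ := fun x => max (min (f.toFun x) (u x)) (-u x)
  have hg : LipschitzWith 1 g := by
    simpa using ((lipschitzWith_of_norm_le (K := 1) (by simpa using hf)).min hu).max hu.neg
  have hg_eq : ∀ x, |f.toFun x| ≤ u x → g x = f.toFun x := fun x hx => by
    simp only [g, min_eq_left (abs_le.mp hx).2, max_eq_left (abs_le.mp hx).1]
  have hg_zero : ∀ x, f.toFun x = 0 ∨ u x = 0 → g x = 0 := by
    rintro x (hx | hx) <;> simp [g, hx, hu0 x]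
  let h : Lip0 M base := ⟨g, ⟨1, hg⟩, hg_zero base (.inl f.map_base)⟩
  refine ⟨h, by simpa using norm_le_of_lipschitzWith (f := h) hg,
    fun x hx => hg_eq x ?_, fun x hx => ⟨fun hfx => hx (hg_zero x (.inl hfx)), ?_⟩⟩
  · -- on the ball, `|f x| ≤ dist x base ≤ 2 * R - dist x base`
    have := f.abs_toFun_le x
    have := mem_closedBall.mp hx
    have : 2 * R - dist x base ≤ u x := le_max_right _ _
    nlinarith [norm_nonneg f, dist_nonneg (x := x) (y := base)]
  · by_contra hfar
    exact hx (hg_zero x (.inr (max_eq_left (by rw [mem_ball, not_lt] at hfar; linarith))))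

theorem exists_tsum_of_support_subset_annulus {h : ℕ → Lip0 M base} {R : ℕ → ℝ≥0}
    (hR : Monotone R) (hh : ∀ k, ‖h k‖ ≤ 1)
    (hsupp : ∀ k, support (h k).toFun ⊆ ball base (R (k + 1)) \ closedBall base (R k)) :
    ∃ F : Lip0 M base, ∀ k, ‖F - ∑ j ∈ Finset.range (k + 1), h j‖ ≤ 2 ∧
      EqOn (F - ∑ j ∈ Finset.range (k + 1), h j).toFun 0 (closedBall base (R (k + 1))) := by
  have hlip : ∀ k, LipschitzWith 1 (h k).toFun :=
    fun k => lipschitzWith_of_norm_le (by simpa using hh k)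
  have hdisj : Pairwise (Disjoint on fun k => support (h k).toFun) := by
    have hlt : ∀ j k, j < k → Disjoint (support (h j).toFun) (support (h k).toFun) := by
      refine fun j k hjk => Set.disjoint_left.mpr fun x hxj hxk => (hsupp k hxk).2 ?_
      exact ball_subset_closedBall.trans (closedBall_subset_closedBall (by exact_mod_cast hR hjk))
        (hsupp j hxj).1
    intro j k hjk
    rcases hjk.lt_or_gt with hjk | hkj
    exacts [hlt j k hjk, (hlt k j hkj).symm]
  have hsum : ∀ x, Summable fun k => (h k).toFun x := fun x =>
    summable_of_hasFiniteSupport (Set.Subsingleton.finite fun i hi j hj =>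
      hdisj.eq (Set.not_disjoint_iff.mpr ⟨x, hi, hj⟩))
  let F : Lip0 M base := ⟨fun x => ∑' k, (h k).toFun x,
    ⟨2 * 1, LipschitzWith.tsum_of_pairwise_disjoint_support hlip hdisj⟩, by simp [map_base]⟩
  refine ⟨F, fun k => ?_⟩
  have htail : (F - ∑ j ∈ Finset.range (k + 1), h j).toFun =
      fun x => ∑' i, (h (i + (k + 1))).toFun x := by
    ext x
    change ∑' i, (h i).toFun x - (∑ j ∈ Finset.range (k + 1), h j).toFun x = _
    rw [toFun_sum, Finset.sum_apply, ← (hsum x).sum_add_tsum_nat_add (k + 1),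
      add_sub_cancel_left]
  refine ⟨norm_le_of_lipschitzWith (K := 2) ?_, ?_⟩ <;> rw [htail]
  · simpa using LipschitzWith.tsum_of_pairwise_disjoint_support (fun i => hlip _)
      (hdisj.comp_of_injective (add_left_injective (k + 1)))
  · intro x hx
    have hzero : ∀ i, (h (i + (k + 1))).toFun x = 0 := fun i =>
      notMem_support.mp fun hxi => (hsupp _ hxi).2
        (closedBall_subset_closedBall (by exact_mod_cast hR (Nat.le_add_left _ _)) hx)
    simp [hzero]

end Lip0

-- Instance search does not reach this through the normed structure of `Free M base`.
instance : ContinuousAdd (Free M base) := (Free M base).toAddSubmonoid.continuousAdd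

def Lip0.toFreeDual (g : Lip0 M base) : StrongDual ℝ (Free M base) :=
  (ContinuousLinearMap.apply ℝ ℝ g).comp (Free M base).subtypeL

@[simp] theorem Lip0.toFreeDual_apply (g : Lip0 M base) (μ : Free M base) :
    g.toFreeDual μ = (μ : StrongDual ℝ (Lip0 M base)) g := rfl

namespace Free

theorem lipschitzWith_deltaF : LipschitzWith 1 (deltaF base) := by
  refine LipschitzWith.of_dist_le_mul fun x y => ?_
  have : ‖evalδ base x - evalδ base y‖ ≤ dist x y :=
    ContinuousLinearMap.opNorm_le_bound _ dist_nonneg fun f => by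
      have := f.lipschitzWith_norm.dist_le_mul x y
      rwa [Real.dist_eq, ← Lip0.norm_def, mul_comm] at this
  rw [NNReal.coe_one, one_mul]
  exact (dist_eq_norm _ _).trans_le this

theorem deltaF_base : deltaF base base = 0 :=
  Subtype.ext <| ContinuousLinearMap.ext fun f => f.map_base

theorem deltaF_mem_freeOn {C : Set M} {x : M} (hx : x ∈ C) : deltaF base x ∈ freeOn base C :=
  Submodule.le_topologicalClosure _ (Submodule.subset_span (mem_image_of_mem _ hx))

theorem dense_span_deltaF :
    Dense (Submodule.span ℝ (range (deltaF base)) : Set (Free M base)) := by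
  have hmap : (Submodule.span ℝ (range (deltaF base))).map (Free M base).subtype =
      Submodule.span ℝ (range (evalδ base)) := by
    rw [Submodule.map_span, ← range_comp]
    rfl
  rw [Subtype.dense_iff, ← Submodule.coe_subtype, ← Submodule.map_coe, hmap,
    ← Submodule.topologicalClosure_coe]
  rfl

theorem exists_lip0_of_forall_lt_norm_sub {C : Set M} {μ : Free M base} {ε : ℝ}
    (h : ∀ ν ∈ freeOn base C, ε < ‖μ - ν‖) :
    ∃ f : Lip0 M base, ‖f‖ ≤ 1 ∧ EqOn f.toFun 0 C ∧
      ε ≤ (μ : StrongDual ℝ (Lip0 M base)) f := by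
  obtain ⟨Φ, hΦ, hΦC, hΦμ⟩ :=
    Submodule.exists_dual_le_apply_of_forall_lt_norm_sub (E := Free M base) (freeOn base C) h
  have hlip : LipschitzWith ‖Φ‖₊ fun x => Φ (deltaF base x) := by
    have := Φ.lipschitz.comp lipschitzWith_deltaF
    rwa [mul_one] at this
  let f : Lip0 M base := ⟨fun x => Φ (deltaF base x), ⟨_, hlip⟩, by simp [deltaF_base]⟩
  have hf : f.toFreeDual = Φ :=
    ContinuousLinearMap.ext_on dense_span_deltaF (by rintro _ ⟨x, rfl⟩; rfl)
  refine ⟨f, (Lip0.norm_le_of_lipschitzWith (f := f) hlip).trans hΦ,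
    fun x hx => hΦC _ (deltaF_mem_freeOn hx), ?_⟩
  rwa [← Lip0.toFreeDual_apply, hf]

end Free

def SmallOutsideBall (φ : StrongDual ℝ (Lip0 M base)) (η : ℝ) (R : ℝ≥0) : Prop :=
  ∀ g : Lip0 M base, EqOn g.toFun 0 (closedBall base R) → |φ g| ≤ η * ‖g‖

theorem SmallOutsideBall.mono {φ : StrongDual ℝ (Lip0 M base)} {η : ℝ} {R R' : ℝ≥0}
    (h : SmallOutsideBall φ η R) (hR : R ≤ R') : SmallOutsideBall φ η R' :=
  fun g hg => h g (hg.mono (closedBall_subset_closedBall (by exact_mod_cast hR)))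

def IsTight (φ : StrongDual ℝ (Lip0 M base)) : Prop :=
  ∀ η > 0, ∃ R : ℝ≥0, SmallOutsideBall φ η R

theorem Free.isTight (μ : Free M base) : IsTight (μ : StrongDual ℝ (Lip0 M base)) := by
  intro η hη
  have hμ : (μ : StrongDual ℝ (Lip0 M base)) ∈
      closure (Submodule.span ℝ (range (evalδ base)) : Set (StrongDual ℝ (Lip0 M base))) := by
    rw [← Submodule.topologicalClosure_coe]
    exact μ.2
  obtain ⟨w, hw, hμw⟩ := Metric.mem_closure_iff.mp hμ η hη
  have hspan : Submodule.span ℝ (range (evalδ base)) =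
      ⨆ n : ℕ, Submodule.span ℝ (evalδ base '' closedBall base n) := by
    rw [← Submodule.span_iUnion, ← image_iUnion, iUnion_closedBall_nat, image_univ]
  have hmono : Monotone fun n : ℕ => Submodule.span ℝ (evalδ base '' closedBall base n) :=
    fun m n hmn =>
      Submodule.span_mono (image_mono (closedBall_subset_closedBall (by exact_mod_cast hmn)))
  rw [hspan, SetLike.mem_coe, Submodule.mem_iSup_of_directed _ hmono.directed_le] at hw
  obtain ⟨n, hwn⟩ := hw
  refine ⟨n, fun g hg => ?_⟩
  have hwg : w g = 0 := by
    have : Submodule.span ℝ (evalδ base '' closedBall base n) ≤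
        LinearMap.ker (ContinuousLinearMap.apply ℝ ℝ g : StrongDual ℝ (Lip0 M base) →ₗ[ℝ] ℝ) :=
      Submodule.span_le.mpr (by rintro _ ⟨x, hx, rfl⟩; exact hg (by simpa using hx))
    exact this hwn
  calc |(μ : StrongDual ℝ (Lip0 M base)) g| = ‖((μ : StrongDual ℝ (Lip0 M base)) - w) g‖ := by
        simp [hwg]
    _ ≤ ‖(μ : StrongDual ℝ (Lip0 M base)) - w‖ * ‖g‖ := ContinuousLinearMap.le_opNorm _ _
    _ ≤ η * ‖g‖ := by
        gcongr
        rw [← dist_eq_norm]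
        exact hμw.le

def MassEscapes (ν : ℕ → StrongDual ℝ (Lip0 M base)) (ε : ℝ) : Prop :=
  ∀ R : ℝ≥0, ∃ n, ∃ f : Lip0 M base, ‖f‖ ≤ 1 ∧ EqOn f.toFun 0 (closedBall base R) ∧ ε ≤ ν n f

variable {ν : ℕ → StrongDual ℝ (Lip0 M base)} {ε η : ℝ}

theorem MassEscapes.exists_ge (hesc : MassEscapes ν ε) (htight : ∀ n, IsTight (ν n))
    (hε : 0 < ε) (R : ℝ≥0) (N : ℕ) :
    ∃ n ≥ N, ∃ f : Lip0 M base, ‖f‖ ≤ 1 ∧ EqOn f.toFun 0 (closedBall base R) ∧ ε ≤ ν n f := by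
  choose ρ hρ using fun p => htight p (ε / 2) (half_pos hε)
  obtain ⟨n, f, hf, hfR, hfn⟩ := hesc (R ⊔ (Finset.range N).sup ρ)
  refine ⟨n, ?_, f, hf, hfR.mono (closedBall_subset_closedBall (by exact_mod_cast le_sup_left)),
    hfn⟩
  by_contra! hn
  have := (hρ n).mono ((Finset.le_sup (Finset.mem_range.mpr hn)).trans le_sup_right) f hfR
  nlinarith [le_abs_self (ν n f), norm_nonneg f]

structure IsHump (ν : ℕ → StrongDual ℝ (Lip0 M base)) (ε η : ℝ) (n m : ℕ) (h : Lip0 M base)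
    (R R' : ℝ≥0) : Prop where
  le : R ≤ R'
  norm_le : ‖h‖ ≤ 1
  support_subset : support h.toFun ⊆ ball base R' \ closedBall base R
  le_apply : ε - 2 * η ≤ ν n h
  abs_apply_le : |ν m h| ≤ η
  small_left : SmallOutsideBall (ν n) η R'
  small_right : SmallOutsideBall (ν m) η R'

theorem MassEscapes.exists_isHump (hesc : MassEscapes ν ε) (htight : ∀ n, IsTight (ν n))
    (hε : 0 < ε) (hη : 0 < η) (R : ℝ≥0) (m : ℕ) :
    ∃ n ≥ m, ∃ h R', IsHump ν ε η n m h R R' := by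
  obtain ⟨ρm, hρm⟩ := htight m η hη
  obtain ⟨n, hmn, f, hf, hf0, hfn⟩ := hesc.exists_ge htight hε (R ⊔ ρm) m
  obtain ⟨ρn, hρn⟩ := htight n η hη
  set r := ρn ⊔ (R ⊔ ρm)
  obtain ⟨h, hh, hhf, hsupp⟩ := f.exists_truncation hf r
  have hr : r ≤ 2 * r := le_mul_of_one_le_left r.2 one_le_two
  have hh0 : EqOn h.toFun 0 (closedBall base (R ⊔ ρm)) := fun x hx =>
    not_not.mp fun hx' => (hsupp hx').1 (hf0 hx)
  refine ⟨n, hmn, h, 2 * r, ⟨le_sup_left.trans (le_sup_right.trans hr), hh,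
    fun x hx => ⟨?_, ?_⟩, ?_, ?_, hρn.mono (le_sup_left.trans hr),
    hρm.mono (le_sup_right.trans (le_sup_right.trans hr))⟩⟩
  · simpa using (hsupp hx).2
  · exact fun hxR => hx (hh0 (closedBall_subset_closedBall (by exact_mod_cast le_sup_left) hxR))
  · have hdiff : EqOn (h - f).toFun 0 (closedBall base ρn) := fun x hx => by
      change h.toFun x - f.toFun x = 0
      rw [hhf (closedBall_subset_closedBall (by exact_mod_cast le_sup_left) hx), sub_self]
    have hdiff_norm : ‖h - f‖ ≤ 2 := (norm_sub_le h f).trans (by linarith)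
    have := hρn (h - f) hdiff
    rw [map_sub] at this
    nlinarith [abs_le.mp this]
  · refine (hρm h (hh0.mono (closedBall_subset_closedBall ?_))).trans (by nlinarith)
    exact_mod_cast le_sup_right

theorem exists_not_cauchySeq_of_isHump (hη : 8 * η < ε) {n m : ℕ → ℕ} (hn : ∀ k, k ≤ n k)
    (hm : ∀ k, k ≤ m k) {h : ℕ → Lip0 M base} {R : ℕ → ℝ≥0}
    (hhump : ∀ k, IsHump ν ε η (n k) (m k) (h k) (R k) (R (k + 1)))
    (hhead : ∀ k,
      |ν (n k) (∑ j ∈ Finset.range k, h j) - ν (m k) (∑ j ∈ Finset.range k, h j)| ≤ η) :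
    ∃ F : Lip0 M base, ¬CauchySeq fun p => ν p F := by
  obtain ⟨F, hF⟩ := Lip0.exists_tsum_of_support_subset_annulus
    (monotone_nat_of_le_succ fun k => (hhump k).le) (fun k => (hhump k).norm_le)
    (fun k => (hhump k).support_subset)
  have hgap : ∀ k, ε - 8 * η ≤ ν (n k) F - ν (m k) F := by
    intro k
    obtain ⟨hT, hT0⟩ := hF k
    set T := F - ∑ j ∈ Finset.range (k + 1), h j
    have hsplit : F = ∑ j ∈ Finset.range k, h j + h k + T := by
      simp only [T, Finset.sum_range_succ]
      abel
    have hη0 : 0 ≤ η := (abs_nonneg _).trans (hhump k).abs_apply_le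
    have htail_n := abs_le.mp ((hhump k).small_left T hT0)
    have htail_m := abs_le.mp ((hhump k).small_right T hT0)
    have hhead_k := abs_le.mp (hhead k)
    have hm_k := abs_le.mp (hhump k).abs_apply_le
    have hn_k := (hhump k).le_apply
    rw [hsplit, map_add, map_add, map_add, map_add]
    nlinarith
  refine ⟨F, fun hF => ?_⟩
  obtain ⟨N, hN⟩ := Metric.cauchySeq_iff.mp hF (ε - 8 * η) (by linarith)
  have := hN (n N) (hn N) (m N) (hm N)
  rw [Real.dist_eq] at this
  linarith [le_abs_self (ν (n N) F - ν (m N) F), hgap N]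

theorem not_massEscapes (hν : ∀ g, CauchySeq fun p => ν p g) (htight : ∀ n, IsTight (ν n))
    (hε : 0 < ε) : ¬MassEscapes ν ε := by
  intro hesc
  have hη : 0 < ε / 16 := by positivity
  have step : ∀ (k : ℕ) (s : ℝ≥0 × Lip0 M base), ∃ n m h R', k ≤ n ∧ k ≤ m ∧
      |ν n s.2 - ν m s.2| ≤ ε / 16 ∧ IsHump ν ε (ε / 16) n m h s.1 R' := by
    rintro k ⟨R, G⟩
    obtain ⟨N, hN⟩ := Metric.cauchySeq_iff.mp (hν G) _ hη
    obtain ⟨n, hn, h, R', hh⟩ := hesc.exists_isHump htight hε hη R (max k N)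
    exact ⟨n, max k N, h, R', (le_max_left _ _).trans hn, le_max_left _ _,
      (hN n ((le_max_right _ _).trans hn) _ (le_max_right _ _)).le, hh⟩
  choose n m h R' hn hm hhead hhump using step
  -- the radius reached and the sum of the humps built so far
  let s : ℕ → ℝ≥0 × Lip0 M base := fun k =>
    Nat.rec (0, 0) (fun k sk => (R' k sk, sk.2 + h k sk)) k
  have hs : ∀ k, (s k).2 = ∑ j ∈ Finset.range k, h j (s j) := by
    intro k
    induction k with
    | zero => rfl
    | succ k ih => rw [Finset.sum_range_succ, ← ih]
  obtain ⟨F, hF⟩ := exists_not_cauchySeq_of_isHump (by linarith) (fun k => hn k (s k))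
    (fun k => hm k (s k)) (R := fun k => (s k).1) (fun k => hhump k (s k))
    (fun k => hs k ▸ hhead k (s k))
  exact hF (hν F)

end FreeSpace

namespace FreeSpace

/-- **Lemma 3.4.** A weakly Cauchy sequence in a free space is almost supported on a
bounded subset of `M`. -/
theorem weaklyCauchy_almost_bounded_support {M : Type*} [MetricSpace M] (base : M)
    (μ : ℕ → ↥(Free M base)) (hμ : WeaklyCauchy μ) :
    ∀ ε > (0 : ℝ), ∃ C : Set M, Bornology.IsBounded C ∧
      ∀ n : ℕ, ∃ ν ∈ freeOn base C, ‖μ n - ν‖ ≤ ε := by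
  intro ε hε
  by_contra! H
  refine not_massEscapes (ν := fun n => (μ n : StrongDual ℝ (Lip0 M base)))
    (fun g => (hμ g.toFreeDual).choose_spec.cauchySeq) (fun n => Free.isTight (μ n)) hε
    fun R => ?_
  obtain ⟨n, hn⟩ := H (closedBall base R) isBounded_closedBall
  exact ⟨n, Free.exists_lip0_of_forall_lt_norm_sub hn⟩

end FreeSpace
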